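/- Let s ≤ m be positive integers, Ω as above, and x_1, ..., x_s nonnegative reals. Then Σ_{j=1}^s x_j^m − (s/Ω)·Σ_{k_j ≥ 1, Σk_j=m} (m!/(k_1!⋯k_s!)) x_1^{k_1}⋯x_s^{k_s} ≥ (s/(m(m-1))) · Σ_{1 ≤ i < j ≤ s} (√(x_i^m) − √(x_j^m))². -/

import Mathlib

/-!
Fix a composition `k` of `m` into `s` positive parts and put `t j = √(x j ^ m)`,
`A = ∑ k j t j ^ 2`, `B = ∑ k j t j`. Lagrange's identity gives
`∑_{i<j} (t i - t j) ^ 2 ≤ ∑_{i<j} k i k j (t i - t j) ^ 2 = m A - B ^ 2`, and weighted AM-GM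
for the products `t i t j` with weights `k i k j - [i = j] k i` (which sum to `m (m - 1)`) gives
`m (m - 1) ∏ x j ^ k j ≤ B ^ 2 - A`. Adding the two,
`m (m - 1) ∏ x j ^ k j + ∑_{i<j} (t i - t j) ^ 2 ≤ (m - 1) A`.
Averaging over all compositions with multinomial weights, where by symmetry each part `k j` has
mean `m / s`, gives the theorem.
-/

open Finset Real

section PairWeight

variable {ι : Type*} [DecidableEq ι]

def pairWeight (k : ι → ℕ) (i j : ι) : ℕ := k i * k j - if i = j then k i else 0

theorem pairWeight_comm (k : ι → ℕ) (i j : ι) : pairWeight k i j = pairWeight k j i := by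
  by_cases h : i = j
  · rw [h]
  · simp [pairWeight, h, Ne.symm h, Nat.mul_comm]

theorem cast_pairWeight {R : Type*} [CommRing R] (k : ι → ℕ) (i j : ι) :
    (pairWeight k i j : R) = k i * k j - if i = j then (k i : R) else 0 := by
  have hle : (if i = j then k i else 0) ≤ k i * k j := by
    split_ifs with h
    · rw [h]; exact Nat.le_mul_self _
    · exact Nat.zero_le _
  rw [pairWeight, Nat.cast_sub hle]
  push_cast
  rfl

variable [Fintype ι]

theorem sum_sum_pairWeight_mul {R : Type*} [CommRing R] (k : ι → ℕ) (z : ι → R) :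
    ∑ i, ∑ j, (pairWeight k i j : R) * (z i * z j) =
      (∑ i, k i * z i) ^ 2 - ∑ i, k i * z i ^ 2 := by
  simp only [cast_pairWeight, sub_mul, sum_sub_distrib, ite_mul, zero_mul, sum_ite_eq,
    mem_univ, if_true, sq, sum_mul_sum]
  congr 1
  exact sum_congr rfl fun i _ => sum_congr rfl fun j _ => by ring

theorem sum_pairWeight {n : ℕ} {k : ι → ℕ} (hk : ∑ i, k i = n) (i : ι) :
    ∑ j, pairWeight k i j = k i * (n - 1) := by
  have hle : k i ≤ k i * n := by
    rcases Nat.eq_zero_or_pos (k i) with h | h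
    · simp [h]
    · exact Nat.le_mul_of_pos_right _ (h.trans_le (hk ▸ single_le_sum (by simp) (mem_univ i)))
  zify [hle, Nat.mul_sub_one]
  simp [cast_pairWeight, sum_sub_distrib, ← mul_sum, ← hk]

theorem sum_sum_pairWeight {n : ℕ} {k : ι → ℕ} (hk : ∑ i, k i = n) :
    ∑ i, ∑ j, pairWeight k i j = n * (n - 1) := by
  simp_rw [sum_pairWeight hk, ← sum_mul, hk]

theorem prod_prod_mul_pow_pairWeight {M : Type*} [CommMonoid M] {n : ℕ} {k : ι → ℕ}
    (hk : ∑ i, k i = n) (t : ι → M) :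
    ∏ i, ∏ j, (t i * t j) ^ pairWeight k i j = ∏ i, t i ^ (2 * (k i * (n - 1))) := by
  simp_rw [mul_pow, prod_mul_distrib]
  rw [prod_comm (f := fun i j => t j ^ pairWeight k i j)]
  simp_rw [prod_pow_eq_pow_sum, ← prod_mul_distrib, ← pow_add]
  refine prod_congr rfl fun i _ => ?_
  rw [sum_congr rfl fun j _ => pairWeight_comm k j i, sum_pairWeight hk, two_mul]

end PairWeight

theorem mul_le_sq_sum_sub_sum_sq {ι : Type*} [Fintype ι] [DecidableEq ι] {n : ℕ} (hn : 2 ≤ n)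
    {k : ι → ℕ} (hk : ∑ i, k i = n) {t : ι → ℝ} (ht : ∀ i, 0 ≤ t i) {G : ℝ} (hG : 0 ≤ G)
    (hGn : G ^ n = ∏ i, t i ^ (2 * k i)) :
    n * (n - 1) * G ≤ (∑ i, k i * t i) ^ 2 - ∑ i, k i * t i ^ 2 := by
  set N := n * (n - 1)
  have hN : 0 < N := Nat.mul_pos (by omega) (by omega)
  have hN_cast : (N : ℝ) = n * (n - 1) := by
    rw [Nat.cast_mul, Nat.cast_sub (by omega), Nat.cast_one]
  have hpairsts : ∑ p : ι × ι, (pairWeight k p.1 p.2 : ℝ) = N := by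
    rw [Fintype.sum_prod_type]; exact_mod_cast sum_sum_pairWeight hk
  have hgeom : ∏ p : ι × ι, (t p.1 * t p.2) ^ (pairWeight k p.1 p.2 : ℝ) = G ^ N := by
    simp_rw [Real.rpow_natCast]
    rw [Fintype.prod_prod_type, prod_prod_mul_pow_pairWeight hk, pow_mul, hGn, ← prod_pow]
    simp_rw [← pow_mul, mul_assoc]
  have hamgm := Real.geom_mean_le_arith_mean univ (fun p : ι × ι => (pairWeight k p.1 p.2 : ℝ))
    (fun p => t p.1 * t p.2) (fun _ _ => Nat.cast_nonneg _)
    (by rw [hpairsts]; exact_mod_cast hN) (fun p _ => mul_nonneg (ht _) (ht _))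
  rw [hgeom, hpairsts, Real.pow_rpow_inv_natCast hG hN.ne', Fintype.sum_prod_type,
    sum_sum_pairWeight_mul, le_div_iff₀ (by exact_mod_cast hN)] at hamgm
  rw [← hN_cast]; linarith

theorem sum_sum_mul_mul_sub_sq {ι R : Type*} [Fintype ι] [CommRing R] (a t : ι → R) :
    ∑ i, ∑ j, a i * a j * (t i - t j) ^ 2 =
      2 * ((∑ i, a i) * ∑ i, a i * t i ^ 2 - (∑ i, a i * t i) ^ 2) := by
  have hright : ∑ i, ∑ j, a i * a j * t j ^ 2 = (∑ i, a i) * ∑ i, a i * t i ^ 2 := by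
    rw [sum_mul_sum]
    exact sum_congr rfl fun i _ => sum_congr rfl fun j _ => by ring
  have hleft : ∑ i, ∑ j, a i * a j * t i ^ 2 = (∑ i, a i) * ∑ i, a i * t i ^ 2 := by
    rw [sum_comm, ← hright]
    exact sum_congr rfl fun i _ => sum_congr rfl fun j _ => by ring
  have hcross : ∑ i, ∑ j, a i * a j * (t i * t j) = (∑ i, a i * t i) ^ 2 := by
    rw [sq, sum_mul_sum]
    exact sum_congr rfl fun i _ => sum_congr rfl fun j _ => by ring
  calc ∑ i, ∑ j, a i * a j * (t i - t j) ^ 2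
      = ∑ i, ∑ j, (a i * a j * t i ^ 2 + a i * a j * t j ^ 2 - 2 * (a i * a j * (t i * t j))) :=
        sum_congr rfl fun i _ => sum_congr rfl fun j _ => by ring
    _ = _ := by
        simp only [sum_add_distrib, sum_sub_distrib, ← mul_sum, hleft, hright, hcross]
        ring

theorem sum_sum_eq_two_nsmul_sum_sum_ite_lt {ι M : Type*} [Fintype ι] [LinearOrder ι]
    [AddCommMonoid M] {f : ι → ι → M} (hf : ∀ i j, f i j = f j i) (hdiag : ∀ i, f i i = 0) :
    ∑ i, ∑ j, f i j = 2 • ∑ i, ∑ j, if i < j then f i j else 0 := by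
  have split : ∀ i j, f i j = (if i < j then f i j else 0) + if j < i then f j i else 0 := by
    intro i j
    rcases lt_trichotomy i j with h | rfl | h
    · simp [h, h.not_gt]
    · simp [hdiag]
    · simp [h, h.not_gt, hf i j]
  calc ∑ i, ∑ j, f i j
      = ∑ i, ∑ j, ((if i < j then f i j else 0) + if j < i then f j i else 0) :=
        sum_congr rfl fun i _ => sum_congr rfl fun j _ => split i j
    _ = 2 • ∑ i, ∑ j, if i < j then f i j else 0 := by
        simp only [two_nsmul, sum_add_distrib]
        exact congrArg _ sum_comm

theorem mul_prod_pow_add_sum_ite_lt_le {ι : Type*} [Fintype ι] [LinearOrder ι] {m : ℕ}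
    (hm : 2 ≤ m) {x : ι → ℝ} (hx : ∀ j, 0 ≤ x j) {k : ι → ℕ} (hk : ∑ j, k j = m)
    (hk_pos : ∀ j, 1 ≤ k j) :
    m * (m - 1) * ∏ j, x j ^ k j +
        ∑ i, ∑ j, (if i < j then (√(x i ^ m) - √(x j ^ m)) ^ 2 else 0) ≤
      (m - 1) * ∑ j, k j * x j ^ m := by
  set t : ι → ℝ := fun j => √(x j ^ m)
  have ht_sq : ∀ j, t j ^ 2 = x j ^ m := fun j => Real.sq_sqrt (pow_nonneg (hx j) m)
  have hk_cast : ∑ j, (k j : ℝ) = m := by exact_mod_cast hk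
  have hamgm : m * (m - 1) * ∏ j, x j ^ k j ≤
      (∑ j, k j * t j) ^ 2 - ∑ j, k j * t j ^ 2 := by
    refine mul_le_sq_sum_sub_sum_sq hm hk (fun j => Real.sqrt_nonneg _)
      (prod_nonneg fun j _ => pow_nonneg (hx j) _) ?_
    rw [← prod_pow]
    refine prod_congr rfl fun j _ => ?_
    rw [pow_mul, ht_sq, ← pow_mul, ← pow_mul, mul_comm]
  have hpairs : ∑ i, ∑ j, (if i < j then (t i - t j) ^ 2 else 0) ≤
      ∑ i, ∑ j, (if i < j then (k i : ℝ) * k j * (t i - t j) ^ 2 else 0) := by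
    refine sum_le_sum fun i _ => sum_le_sum fun j _ => ?_
    split_ifs
    · have : (1 : ℝ) ≤ k i * k j := by exact_mod_cast Nat.mul_le_mul (hk_pos i) (hk_pos j)
      nlinarith [sq_nonneg (t i - t j)]
    · rfl
  have hlagrange := sum_sum_mul_mul_sub_sq (fun j => (k j : ℝ)) t
  rw [sum_sum_eq_two_nsmul_sum_sum_ite_lt (fun i j => by ring) (fun i => by simp), hk_cast,
    two_nsmul] at hlagrange
  simp_rw [ht_sq] at hamgm hlagrange
  show _ + ∑ i, ∑ j, (if i < j then (t i - t j) ^ 2 else 0) ≤ _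
  linarith

def compositionTuples (s m : ℕ) : Finset (Fin s → ℕ) :=
  (Finset.Nat.antidiagonalTuple s m).filter fun k => ∀ j, 1 ≤ k j

theorem mem_compositionTuples {s m : ℕ} {k : Fin s → ℕ} :
    k ∈ compositionTuples s m ↔ ∑ j, k j = m ∧ ∀ j, 1 ≤ k j := by
  rw [compositionTuples, mem_filter, Finset.Nat.mem_antidiagonalTuple]

theorem compositionTuples_nonempty {s m : ℕ} (hs : 0 < s) (hsm : s ≤ m) :
    (compositionTuples s m).Nonempty := by
  refine ⟨fun j => 1 + (Pi.single (⟨0, hs⟩ : Fin s) (m - s) : Fin s → ℕ) j, ?_⟩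
  simp only [mem_compositionTuples, sum_add_distrib, sum_pi_single', mem_univ, if_true,
    sum_const, card_univ, Fintype.card_fin, smul_eq_mul, mul_one]
  exact ⟨by omega, fun j => Nat.le_add_right 1 _⟩

theorem multinomial_univ_comp_perm {ι : Type*} [Fintype ι] (k : ι → ℕ) (σ : Equiv.Perm ι) :
    Nat.multinomial univ (k ∘ σ) = Nat.multinomial univ k := by
  simp only [Nat.multinomial, Function.comp_apply, Equiv.sum_comp σ k,
    Equiv.prod_comp σ fun i => (k i).factorial]

theorem comp_perm_mem_compositionTuples {s m : ℕ} {k : Fin s → ℕ} (σ : Equiv.Perm (Fin s))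
    (hk : k ∈ compositionTuples s m) : k ∘ σ ∈ compositionTuples s m := by
  simp only [mem_compositionTuples, Function.comp_apply, Equiv.sum_comp σ k] at hk ⊢
  exact ⟨hk.1, fun j => hk.2 (σ j)⟩

theorem sum_multinomial_mul_apply_eq {s m : ℕ} (i j : Fin s) :
    ∑ k ∈ compositionTuples s m, Nat.multinomial univ k * k i =
      ∑ k ∈ compositionTuples s m, Nat.multinomial univ k * k j := by
  refine sum_nbij' (· ∘ Equiv.swap i j) (· ∘ Equiv.swap i j)
    (fun k hk => comp_perm_mem_compositionTuples _ hk)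
    (fun k hk => comp_perm_mem_compositionTuples _ hk) (fun k _ => ?_) (fun k _ => ?_)
    (fun k _ => ?_)
  · ext; simp
  · ext; simp
  · simp [multinomial_univ_comp_perm]

theorem card_mul_sum_multinomial_mul_apply {s m : ℕ} (j : Fin s) :
    s * ∑ k ∈ compositionTuples s m, Nat.multinomial univ k * k j =
      m * ∑ k ∈ compositionTuples s m, Nat.multinomial univ k := by
  calc s * ∑ k ∈ compositionTuples s m, Nat.multinomial univ k * k j
      = ∑ i : Fin s, ∑ k ∈ compositionTuples s m, Nat.multinomial univ k * k i := by
        simp [sum_multinomial_mul_apply_eq _ j]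
    _ = ∑ k ∈ compositionTuples s m, Nat.multinomial univ k * ∑ i, k i := by
        rw [sum_comm]; simp_rw [mul_sum]
    _ = m * ∑ k ∈ compositionTuples s m, Nat.multinomial univ k := by
        rw [mul_sum]
        refine sum_congr rfl fun k hk => ?_
        rw [(mem_compositionTuples.mp hk).1, mul_comm]

theorem card_mul_sum_multinomial_mul_sum {s m : ℕ} (y : Fin s → ℝ) :
    s * ∑ k ∈ compositionTuples s m, (Nat.multinomial univ k : ℝ) * ∑ j, k j * y j =
      m * (∑ k ∈ compositionTuples s m, (Nat.multinomial univ k : ℝ)) * ∑ j, y j := by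
  have hcoord : ∀ j, (s : ℝ) * ∑ k ∈ compositionTuples s m, (Nat.multinomial univ k : ℝ) * k j =
      m * ∑ k ∈ compositionTuples s m, (Nat.multinomial univ k : ℝ) := fun j => by
    exact_mod_cast card_mul_sum_multinomial_mul_apply j
  calc (s : ℝ) * ∑ k ∈ compositionTuples s m, (Nat.multinomial univ k : ℝ) * ∑ j, k j * y j
      = ∑ j, (s * ∑ k ∈ compositionTuples s m, (Nat.multinomial univ k : ℝ) * k j) * y j := by
        simp_rw [mul_sum, sum_mul]
        rw [sum_comm]
        exact sum_congr rfl fun j _ => sum_congr rfl fun k _ => by ring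
    _ = _ := by simp_rw [hcoord, mul_sum]

theorem edge_laplacian_form_pairs_bound (s m : ℕ) (hs : 2 ≤ s) (hsm : s ≤ m)
    (x : Fin s → ℝ) (hx : ∀ j, 0 ≤ x j) :
    ∑ j : Fin s, x j ^ m -
      ((s : ℝ) /
          (∑ k ∈ (Finset.Nat.antidiagonalTuple s m).filter (fun k => ∀ j, 1 ≤ k j),
            (Nat.multinomial Finset.univ k : ℝ))) *
        ∑ k ∈ (Finset.Nat.antidiagonalTuple s m).filter (fun k => ∀ j, 1 ≤ k j),
          (Nat.multinomial Finset.univ k : ℝ) * ∏ j : Fin s, x j ^ k j ≥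
      ((s : ℝ) / (m * (m - 1))) *
        ∑ i : Fin s, ∑ j : Fin s,
          if i < j then (Real.sqrt (x i ^ m) - Real.sqrt (x j ^ m)) ^ 2 else 0 := by
  have hm : 2 ≤ m := hs.trans hsm
  change _ - (_ / ∑ k ∈ compositionTuples s m, _) * ∑ k ∈ compositionTuples s m, _ ≥ _
  set Ω := ∑ k ∈ compositionTuples s m, (Nat.multinomial univ k : ℝ)
  set P := ∑ i : Fin s, ∑ j : Fin s,
    if i < j then (Real.sqrt (x i ^ m) - Real.sqrt (x j ^ m)) ^ 2 else 0
  have hΩ : 0 < Ω := sum_pos (fun k _ => mod_cast Nat.multinomial_pos _ _)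
    (compositionTuples_nonempty (by omega) hsm)
  have hM : (0 : ℝ) < m * (m - 1) := by
    have : (2 : ℝ) ≤ m := mod_cast hm
    nlinarith
  have hsum : m * (m - 1) * ∑ k ∈ compositionTuples s m,
        (Nat.multinomial univ k : ℝ) * ∏ j, x j ^ k j + Ω * P ≤
      (m - 1) * ∑ k ∈ compositionTuples s m,
        (Nat.multinomial univ k : ℝ) * ∑ j, k j * x j ^ m := by
    have hΩP : Ω * P = ∑ k ∈ compositionTuples s m, (Nat.multinomial univ k : ℝ) * P :=
      sum_mul _ _ _
    rw [hΩP, mul_sum, mul_sum, ← sum_add_distrib]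
    refine sum_le_sum fun k hk => ?_
    rw [mem_compositionTuples] at hk
    have hgap := mul_le_mul_of_nonneg_left (mul_prod_pow_add_sum_ite_lt_le hm hx hk.1 hk.2)
      (Nat.cast_nonneg (α := ℝ) (Nat.multinomial univ k))
    linarith
  have havg := card_mul_sum_multinomial_mul_sum (m := m) fun j => x j ^ m
  rw [ge_iff_le, le_sub_iff_add_le, div_mul_eq_mul_div, div_mul_eq_mul_div,
    div_add_div _ _ hM.ne' hΩ.ne', div_le_iff₀ (mul_pos hM hΩ)]
  nlinarith [mul_le_mul_of_nonneg_left hsum (Nat.cast_nonneg (α := ℝ) s)]
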